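/- Let X be a tournament on a vertex set V with |V| = n and let I ⊆ [n−1]. Then the number of V-listings σ with X Des(σ) = I equals the number of V-listings σ with (complement of X) Des(σ) = I^op, where I^op = {n − i : i ∈ I}. (This yields U_X = U_{complement of X} for tournaments.) -/

import Mathlib

/-- The 1-based `X`-descent set of a listing `l = (σ_1, …, σ_n)`:
the set of `i ∈ [n-1]` with `(σ_i, σ_{i+1}) ∈ E`. -/
def XDes {V : Type*} (E : V → V → Prop) (l : List V) : Set ℕ :=
  {i : ℕ | ∃ (h1 : 1 ≤ i) (h2 : i ≤ l.length - 1),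
    E (l.get ⟨i - 1, by omega⟩) (l.get ⟨i, by omega⟩)}

/-- Edge relation of the complement digraph: pairs `(u,v)` with `u ≠ v` not in `E`. -/
def complEdge {V : Type*} (E : V → V → Prop) (u v : V) : Prop :=
  u ≠ v ∧ ¬ E u v

/-!
Reversing a listing turns an `X`-descent at position `i` into a descent of the reversed digraph
at position `n - i`. For a tournament, the reversed digraph and the complement have the same edges
between distinct vertices, so `σ ↦ reverse σ` is the required bijection.
-/

namespace XDes

variable {V : Type*}

lemma subset_Icc (R : V → V → Prop) (l : List V) : XDes R l ⊆ Set.Icc 1 (l.length - 1) :=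
  fun _ ⟨h1, h2, _⟩ => ⟨h1, h2⟩

lemma congr_of_nodup {R S : V → V → Prop} {l : List V} (hl : l.Nodup)
    (hRS : ∀ u v, u ≠ v → (R u v ↔ S u v)) : XDes R l = XDes S l := by
  ext i
  simp only [XDes, Set.mem_ofPred_eq, List.get_eq_getElem]
  refine exists_congr fun h1 => exists_congr fun h2 => hRS _ _ fun h => ?_
  have := hl.getElem_inj_iff.mp h
  omega

lemma reverse (R : V → V → Prop) (l : List V) :
    XDes R l.reverse = (fun i => l.length - i) '' XDes (flip R) l := by
  ext i
  simp only [XDes, Set.mem_ofPred_eq, Set.mem_image, List.length_reverse,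
    List.get_eq_getElem, List.getElem_reverse, flip]
  constructor
  · rintro ⟨h1, h2, hR⟩
    refine ⟨l.length - i, ⟨by omega, by omega, ?_⟩, by omega⟩
    convert hR using 2 <;> omega
  · rintro ⟨j, ⟨h1, h2, hR⟩, rfl⟩
    refine ⟨by omega, by omega, ?_⟩
    convert hR using 2 <;> omega

end XDes

lemma List.length_eq_card_of_nodup_of_forall_mem {V : Type*} [Fintype V] {l : List V}
    (hnd : l.Nodup) (hall : ∀ x, x ∈ l) : l.length = Fintype.card V := by
  classical
  rw [← List.toFinset_card_of_nodup hnd,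
    Finset.eq_univ_of_forall fun x => List.mem_toFinset.mpr (hall x), Finset.card_univ]

lemma injOn_tsub_left_Icc (n : ℕ) : Set.InjOn (fun i => n - i) (Set.Icc 1 (n - 1)) :=
  fun _ ha _ hb h => by simp only [Set.mem_Icc] at ha hb h; omega

theorem tournament_descents_compl_general {V : Type*} [Fintype V]
    (E : V → V → Prop)
    (htour : ∀ u v : V, u ≠ v → (E u v ↔ ¬ E v u))
    (I : Set ℕ) (hI : I ⊆ Set.Icc 1 (Fintype.card V - 1)) :
    Nat.card {l : List V // l.Nodup ∧ (∀ x, x ∈ l) ∧ XDes E l = I} =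
      Nat.card {l : List V // l.Nodup ∧ (∀ x, x ∈ l) ∧
        XDes (complEdge E) l = (fun i => Fintype.card V - i) '' I} := by
  have hflip : ∀ u v, u ≠ v → (flip (complEdge E) u v ↔ E u v) := fun u v huv =>
    ⟨fun h => (htour u v huv).mpr h.2, fun h => ⟨huv.symm, (htour u v huv).mp h⟩⟩
  refine Nat.card_congr <|
    (List.reverse_involutive.toPerm _).subtypeEquiv fun l => ?_
  simp only [Function.Involutive.coe_toPerm, List.nodup_reverse, List.mem_reverse]
  refine and_congr_right fun hnd => and_congr_right fun hall => ?_
  have hlen := List.length_eq_card_of_nodup_of_forall_mem hnd hall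
  rw [XDes.reverse, XDes.congr_of_nodup hnd hflip, hlen,
    (injOn_tsub_left_Icc _).image_eq_image_iff (hlen ▸ XDes.subset_Icc E l) hI]

/-- For a tournament `X` on `V` with `|V| = n` and `I ⊆ [n-1]`, the number of
`V`-listings `σ` with `X Des(σ) = I` equals the number of `V`-listings `σ` with
`(complement of X) Des(σ) = I^op`, where `I^op = {n - i : i ∈ I}`. -/
theorem tournament_descents_compl {V : Type*} [Fintype V]
    (E : V → V → Prop) (hE : ∀ x, ¬ E x x)
    (htour : ∀ u v : V, u ≠ v → (E u v ↔ ¬ E v u))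
    (I : Set ℕ) (hI : I ⊆ Set.Icc 1 (Fintype.card V - 1)) :
    Nat.card {l : List V // l.Nodup ∧ (∀ x, x ∈ l) ∧ XDes E l = I} =
      Nat.card {l : List V // l.Nodup ∧ (∀ x, x ∈ l) ∧
        XDes (complEdge E) l = (fun i => Fintype.card V - i) '' I} :=
  tournament_descents_compl_general E htour I hI
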